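/- arXiv:math-ph/0602008 — 3 statements merged into one kernel-verified Lean document; each statement's English description precedes it below -/
import Mathlib

section
/- There is no C² function u : ℝ² → ℝ satisfying the modified elliptic Liouville equation u_xx + u_yy - exp(2u) = 0 at every point of the plane; i.e., the equation ∇²u = exp(2u) possesses no solution valid in the entire plane ℝ². -/
/-!
For `R > 0` the function `v = log (2R / (R² - |p|²))` solves `Δv = exp (2v)` in the disk of
radius `R` and tends to `+∞` at its boundary, so `u - v`, equivalently `(R² - |p|²) exp u`,
attains its maximum at an interior point `p`. There `Δu ≤ Δv`, so the equation gives
`exp (2u) ≤ exp (2v)`, i.e. `(R² - |p|²) exp u ≤ 2R` at `p` and hence on the whole disk.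
At the origin this reads `R exp (u 0) ≤ 2`, which fails for large `R`.
-/

open Filter Topology Real

theorem IsLocalMax.deriv_deriv_nonpos {f : ℝ → ℝ} {a : ℝ} (hmax : IsLocalMax f a)
    (hc : ContinuousAt f a) : deriv (deriv f) a ≤ 0 := by
  by_contra! hpos
  -- A positive second derivative would make `a` a local minimum too, so `f` is locally constant.
  have hconst : f =ᶠ[𝓝 a] fun _ => f a :=
    ((isLocalMin_of_deriv_deriv_pos hpos hmax.deriv_eq_zero hc).and hmax).mono
      fun _ hx => le_antisymm hx.2 hx.1
  have hderiv : deriv f =ᶠ[𝓝 a] fun _ => 0 :=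
    hconst.eventually_nhds.mono fun _ (hx : f =ᶠ[𝓝 _] _) => by rw [hx.deriv_eq, deriv_const]
  rw [hderiv.deriv_eq, deriv_const] at hpos
  exact hpos.false

theorem deriv_deriv_le_of_isLocalMax_sub {f g : ℝ → ℝ} {a : ℝ} (hf : ContDiffAt ℝ 2 f a)
    (hg : ContDiffAt ℝ 2 g a) (hmax : IsLocalMax (f - g) a) :
    deriv (deriv f) a ≤ deriv (deriv g) a := by
  have hderiv : deriv (f - g) =ᶠ[𝓝 a] deriv f - deriv g := by
    filter_upwards [hf.eventually (by simp), hg.eventually (by simp)] with x hfx hgx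
    exact deriv_sub (hfx.differentiableAt two_ne_zero) (hgx.differentiableAt two_ne_zero)
  have h := hmax.deriv_deriv_nonpos (hf.continuousAt.sub hg.continuousAt)
  rw [hderiv.deriv_eq, deriv_sub ((hf.derivWithin (m := 1) le_rfl).differentiableAt one_ne_zero)
    ((hg.derivWithin (m := 1) le_rfl).differentiableAt one_ne_zero)] at h
  linarith

section Barrier

variable {c x : ℝ}

theorem hasDerivAt_neg_log_sub_sq (hx : x ^ 2 < c) :
    HasDerivAt (fun t => -log (c - t ^ 2)) (2 * x / (c - x ^ 2)) x := by
  refine (((hasDerivAt_pow 2 x).const_sub c).log (sub_pos.2 hx).ne').neg.congr_deriv ?_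
  push_cast
  ring

theorem hasDerivAt_two_mul_div_sub_sq (hx : x ^ 2 < c) :
    HasDerivAt (fun t => 2 * t / (c - t ^ 2)) (2 * (c + x ^ 2) / (c - x ^ 2) ^ 2) x := by
  refine (((hasDerivAt_id x).const_mul 2).div ((hasDerivAt_pow 2 x).const_sub c)
    (sub_pos.2 hx).ne').congr_deriv ?_
  simp only [id]
  push_cast
  ring

theorem deriv_deriv_neg_log_sub_sq (hx : x ^ 2 < c) :
    deriv (deriv fun t => -log (c - t ^ 2)) x = 2 * (c + x ^ 2) / (c - x ^ 2) ^ 2 := by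
  have hderiv : deriv (fun t => -log (c - t ^ 2)) =ᶠ[𝓝 x] fun t => 2 * t / (c - t ^ 2) := by
    filter_upwards [(isOpen_lt (continuous_pow 2) continuous_const).mem_nhds hx] with t ht
    exact (hasDerivAt_neg_log_sub_sq ht).deriv
  rw [hderiv.deriv_eq, (hasDerivAt_two_mul_div_sub_sq hx).deriv]

theorem deriv_deriv_le_of_isLocalMax_add_log {f : ℝ → ℝ} (hf : ContDiffAt ℝ 2 f x)
    (hx : x ^ 2 < c) (hmax : IsLocalMax (fun t => f t + log (c - t ^ 2)) x) :
    deriv (deriv f) x ≤ 2 * (c + x ^ 2) / (c - x ^ 2) ^ 2 := by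
  have hg : ContDiffAt ℝ 2 (fun t => -log (c - t ^ 2)) x :=
    ((contDiffAt_const.sub (contDiffAt_id.pow 2)).log (sub_pos.2 hx).ne').neg
  rw [← deriv_deriv_neg_log_sub_sq hx]
  exact deriv_deriv_le_of_isLocalMax_sub hf hg
    (hmax.congr (Eventually.of_forall fun t => by simp [sub_neg_eq_add]))

end Barrier

noncomputable def planeLaplacian (u : ℝ × ℝ → ℝ) (p : ℝ × ℝ) : ℝ :=
  deriv (deriv fun x => u (x, p.2)) p.1 + deriv (deriv fun y => u (p.1, y)) p.2

theorem planeLaplacian_le_of_isLocalMax_add_log {u : ℝ × ℝ → ℝ} (hu : ContDiff ℝ 2 u)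
    {R : ℝ} {p : ℝ × ℝ} (hp : p.1 ^ 2 + p.2 ^ 2 < R ^ 2)
    (hmax : IsLocalMax (fun q => u q + log (R ^ 2 - q.1 ^ 2 - q.2 ^ 2)) p) :
    planeLaplacian u p ≤ 4 * R ^ 2 / (R ^ 2 - p.1 ^ 2 - p.2 ^ 2) ^ 2 := by
  obtain ⟨a, b⟩ := p
  have hx : deriv (deriv fun x => u (x, b)) a
      ≤ 2 * (R ^ 2 - b ^ 2 + a ^ 2) / (R ^ 2 - b ^ 2 - a ^ 2) ^ 2 := by
    refine deriv_deriv_le_of_isLocalMax_add_log (hu.comp (by fun_prop)).contDiffAt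
      (by linarith) ((hmax.comp_continuous (g := fun x => (x, b)) (by fun_prop)).congr
        (Eventually.of_forall fun x => ?_))
    simp only [Function.comp_apply]
    ring_nf
  have hy : deriv (deriv fun y => u (a, y)) b
      ≤ 2 * (R ^ 2 - a ^ 2 + b ^ 2) / (R ^ 2 - a ^ 2 - b ^ 2) ^ 2 :=
    deriv_deriv_le_of_isLocalMax_add_log (hu.comp (by fun_prop)).contDiffAt (by linarith)
      (hmax.comp_continuous (g := fun y => (a, y)) (by fun_prop))
  calc planeLaplacian u (a, b)
      ≤ 2 * (R ^ 2 - b ^ 2 + a ^ 2) / (R ^ 2 - b ^ 2 - a ^ 2) ^ 2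
        + 2 * (R ^ 2 - a ^ 2 + b ^ 2) / (R ^ 2 - a ^ 2 - b ^ 2) ^ 2 := add_le_add hx hy
    _ = 4 * R ^ 2 / (R ^ 2 - a ^ 2 - b ^ 2) ^ 2 := by ring

theorem exists_isMaxOn_disk {u : ℝ × ℝ → ℝ} (hu : Continuous u) {R : ℝ} (hR : 0 < R) :
    ∃ p : ℝ × ℝ, p.1 ^ 2 + p.2 ^ 2 < R ^ 2 ∧
      IsMaxOn (fun q => (R ^ 2 - q.1 ^ 2 - q.2 ^ 2) * exp (u q))
        {q | q.1 ^ 2 + q.2 ^ 2 ≤ R ^ 2} p := by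
  set S : Set (ℝ × ℝ) := {q | q.1 ^ 2 + q.2 ^ 2 ≤ R ^ 2}
  have hS : IsCompact S := by
    refine (isCompact_Icc (a := -R) (b := R)).prod (isCompact_Icc (a := -R) (b := R))
      |>.of_isClosed_subset
      (isClosed_le (f := fun q : ℝ × ℝ => q.1 ^ 2 + q.2 ^ 2) (by fun_prop) continuous_const)
      fun q hq => ?_
    have hq : q.1 ^ 2 + q.2 ^ 2 ≤ R ^ 2 := hq
    exact ⟨abs_le_of_sq_le_sq' (by nlinarith) hR.le, abs_le_of_sq_le_sq' (by nlinarith) hR.le⟩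
  have h0 : (0 : ℝ × ℝ) ∈ S := by simpa [S] using sq_nonneg R
  have hΦ : Continuous fun q : ℝ × ℝ => (R ^ 2 - q.1 ^ 2 - q.2 ^ 2) * exp (u q) := by fun_prop
  obtain ⟨p, -, hmax⟩ := hS.exists_isMaxOn ⟨0, h0⟩ hΦ.continuousOn
  refine ⟨p, ?_, hmax⟩
  have hpos : 0 < (R ^ 2 - p.1 ^ 2 - p.2 ^ 2) * exp (u p) :=
    lt_of_lt_of_le (by simp; positivity) (isMaxOn_iff.mp hmax 0 h0)
  linarith [pos_of_mul_pos_left hpos (exp_pos _).le]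

theorem isLocalMax_add_log_of_isMaxOn {u : ℝ × ℝ → ℝ} {R : ℝ} {p : ℝ × ℝ}
    (hp : p.1 ^ 2 + p.2 ^ 2 < R ^ 2)
    (hmax : IsMaxOn (fun q => (R ^ 2 - q.1 ^ 2 - q.2 ^ 2) * exp (u q))
      {q | q.1 ^ 2 + q.2 ^ 2 ≤ R ^ 2} p) :
    IsLocalMax (fun q => u q + log (R ^ 2 - q.1 ^ 2 - q.2 ^ 2)) p := by
  filter_upwards [(isOpen_lt (f := fun q : ℝ × ℝ => q.1 ^ 2 + q.2 ^ 2) (by fun_prop)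
    continuous_const).mem_nhds hp] with q (hq : _ < _)
  have hρq : 0 < R ^ 2 - q.1 ^ 2 - q.2 ^ 2 := by linarith
  have hρp : 0 < R ^ 2 - p.1 ^ 2 - p.2 ^ 2 := by linarith
  have h := log_le_log (by positivity) (isMaxOn_iff.mp hmax q hq.le)
  rw [log_mul hρq.ne' (exp_pos _).ne', log_mul hρp.ne' (exp_pos _).ne', log_exp,
    log_exp] at h
  linarith

theorem mul_exp_le_two_of_exp_two_mul_le_planeLaplacian {u : ℝ × ℝ → ℝ}
    (hu : ContDiff ℝ 2 u) (hsub : ∀ p, exp (2 * u p) ≤ planeLaplacian u p) {R : ℝ}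
    (hR : 0 < R) : R * exp (u 0) ≤ 2 := by
  obtain ⟨p, hp, hmax⟩ := exists_isMaxOn_disk hu.continuous hR
  have hρ : 0 < R ^ 2 - p.1 ^ 2 - p.2 ^ 2 := by linarith
  have hlap := planeLaplacian_le_of_isLocalMax_add_log hu hp
    (isLocalMax_add_log_of_isMaxOn hp hmax)
  have hbound_sq : ((R ^ 2 - p.1 ^ 2 - p.2 ^ 2) * exp (u p)) ^ 2 ≤ (2 * R) ^ 2 :=
    calc ((R ^ 2 - p.1 ^ 2 - p.2 ^ 2) * exp (u p)) ^ 2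
        = (R ^ 2 - p.1 ^ 2 - p.2 ^ 2) ^ 2 * exp (2 * u p) := by
          rw [mul_pow, ← exp_nat_mul]; norm_num
      _ ≤ (R ^ 2 - p.1 ^ 2 - p.2 ^ 2) ^ 2 * (4 * R ^ 2 / (R ^ 2 - p.1 ^ 2 - p.2 ^ 2) ^ 2) := by
          gcongr; exact (hsub p).trans hlap
      _ = (2 * R) ^ 2 := by field_simp; ring
  have hbound := (pow_le_pow_iff_left₀ (by positivity) (by positivity) two_ne_zero).mp hbound_sq
  have h0 := isMaxOn_iff.mp hmax 0 (by simpa using sq_nonneg R)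
  simp only [Prod.fst_zero, Prod.snd_zero] at h0
  nlinarith

/-- There is no C² function `u : ℝ² → ℝ` satisfying the modified elliptic
Liouville equation `u_xx + u_yy - exp(2u) = 0` at every point of the plane. -/
theorem modified_liouville_no_global_solution :
    ¬ ∃ u : ℝ × ℝ → ℝ, ContDiff ℝ 2 u ∧
      ∀ x y : ℝ,
        deriv (deriv (fun x' : ℝ => u (x', y))) x
          + deriv (deriv (fun y' : ℝ => u (x, y'))) y
          - Real.exp (2 * u (x, y)) = 0 := by
  rintro ⟨u, hu, hpde⟩
  have h := mul_exp_le_two_of_exp_two_mul_le_planeLaplacian hu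
    (fun p => (sub_eq_zero.mp (hpde p.1 p.2)).ge) (R := 3 * exp (-u 0)) (by positivity)
  rw [mul_assoc, ← exp_add, neg_add_cancel, exp_zero] at h
  norm_num at h
end

section
/- Let u, v : ℝ³ → ℝ be smooth functions of (x, y, t) solving the plasma system ∂_t(u - ∇²u ± ∇²v) + {v ± u, u - ∇²u ± ∇²v} = 0 (both sign choices). Then for every λ ∈ ℝ, the functions ũ(x,y,t) = u(x cos(λt) + y sin(λt), -x sin(λt) + y cos(λt), t) and ṽ(x,y,t) = v(x cos(λt) + y sin(λt), -x sin(λt) + y cos(λt), t) + λ(x² + y²)/2 also solve the same system. -/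
/-- Partial derivative in `x` of a function of `(x, y, t)`. -/
noncomputable def pdx (f : ℝ → ℝ → ℝ → ℝ) (x y t : ℝ) : ℝ :=
  deriv (fun x' => f x' y t) x

/-- Partial derivative in `y` of a function of `(x, y, t)`. -/
noncomputable def pdy (f : ℝ → ℝ → ℝ → ℝ) (x y t : ℝ) : ℝ :=
  deriv (fun y' => f x y' t) y

/-- Partial derivative in `t` of a function of `(x, y, t)`. -/
noncomputable def pdt (f : ℝ → ℝ → ℝ → ℝ) (x y t : ℝ) : ℝ :=
  deriv (fun t' => f x y t') t

/-- Two-dimensional Laplacian `∇²f = f_xx + f_yy` (derivatives in `x`, `y` only). -/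
noncomputable def lap (f : ℝ → ℝ → ℝ → ℝ) (x y t : ℝ) : ℝ :=
  deriv (deriv (fun x' => f x' y t)) x + deriv (deriv (fun y' => f x y' t)) y

/-- Poisson bracket `{f, g} = f_x g_y - g_x f_y`. -/
noncomputable def pb (f g : ℝ → ℝ → ℝ → ℝ) (x y t : ℝ) : ℝ :=
  pdx f x y t * pdy g x y t - pdx g x y t * pdy f x y t

/-- The quantity `u - ∇²u + ε ∇²v` (with sign `ε = ±1`). -/
noncomputable def plasmaW (ε : ℝ) (u v : ℝ → ℝ → ℝ → ℝ) : ℝ → ℝ → ℝ → ℝ :=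
  fun x y t => u x y t - lap u x y t + ε * lap v x y t

/-- The plasma system `∂_t(u - ∇²u ± ∇²v) + {v ± u, u - ∇²u ± ∇²v} = 0`
(both sign choices `ε = 1` and `ε = -1`). -/
def IsPlasmaSol (u v : ℝ → ℝ → ℝ → ℝ) : Prop :=
  ∀ ε ∈ ({1, -1} : Set ℝ), ∀ x y t : ℝ,
    pdt (plasmaW ε u v) x y t
      + pb (fun x' y' t' => v x' y' t' + ε * u x' y' t') (plasmaW ε u v) x y t = 0

/-- Smoothness of a function of `(x, y, t)`. -/
def Smooth3 (f : ℝ → ℝ → ℝ → ℝ) : Prop :=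
  ContDiff ℝ (⊤ : ℕ∞) (fun p : ℝ × ℝ × ℝ => f p.1 p.2.1 p.2.2)

abbrev E3 : Type := ℝ × ℝ × ℝ
noncomputable def toF (f : ℝ → ℝ → ℝ → ℝ) : E3 → ℝ := fun p => f p.1 p.2.1 p.2.2
noncomputable def D1 (F : E3 → ℝ) (w : E3) : E3 → ℝ := fun p => fderiv ℝ F p w
noncomputable def rcomp (lam : ℝ) (F : E3 → ℝ) : ℝ → ℝ → ℝ → ℝ :=
  fun x y t => F (x * Real.cos (lam*t) + y * Real.sin (lam*t),
    -x * Real.sin (lam*t) + y * Real.cos (lam*t), t)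
noncomputable def rcompq (lam : ℝ) (F : E3 → ℝ) : ℝ → ℝ → ℝ → ℝ :=
  fun x y t => rcomp lam F x y t + lam * (x ^ 2 + y ^ 2) / 2
noncomputable def rcompc (lam k : ℝ) (F : E3 → ℝ) : ℝ → ℝ → ℝ → ℝ :=
  fun x y t => rcomp lam F x y t + k

lemma D1_smooth {F : E3 → ℝ} (hF : ContDiff ℝ (⊤ : ℕ∞) F) (w : E3) : ContDiff ℝ (⊤ : ℕ∞) (D1 F w) :=
  (hF.fderiv_right (by simp)).clm_apply contDiff_const

lemma comp_curve {F : E3 → ℝ} (hF : ContDiff ℝ (⊤ : ℕ∞) F)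
    {γ : ℝ → E3} {d : E3} {pt : ℝ} (hγ : HasDerivAt γ d pt) :
    HasDerivAt (fun s => F (γ s)) (D1 F d (γ pt)) pt :=
  ((hF.differentiable (by simp)) (γ pt)).hasFDerivAt.comp_hasDerivAt pt hγ

lemma D1_lin2 (G : E3 → ℝ) (a b : ℝ) (vv w : E3) (p : E3) :
    D1 G (a • vv + b • w) p = a * D1 G vv p + b * D1 G w p := by
  simp [D1, smul_eq_mul]

lemma D1_lin3 (G : E3 → ℝ) (a b c : ℝ) (vv w z : E3) (p : E3) :
    D1 G (a • vv + b • w + c • z) p = a * D1 G vv p + b * D1 G w p + c * D1 G z p := by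
  simp [D1, smul_eq_mul]

lemma D1_inner {F : E3 → ℝ} (hF : ContDiff ℝ (⊤ : ℕ∞) F) (a b : ℝ) (vv w d : E3) (p : E3) :
    D1 (D1 F (a • vv + b • w)) d p
      = a * D1 (D1 F vv) d p + b * D1 (D1 F w) d p := by
  have h : D1 F (a • vv + b • w) = fun q => a • D1 F vv q + b • D1 F w q := by
    funext q; simp [D1, smul_eq_mul]
  have hv : DifferentiableAt ℝ (D1 F vv) p := ((D1_smooth hF vv).differentiable (by simp)) p
  have hw : DifferentiableAt ℝ (D1 F w) p := ((D1_smooth hF w).differentiable (by simp)) p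
  show fderiv ℝ (D1 F (a • vv + b • w)) p d = _
  rw [h, fderiv_fun_add (f := fun q => a • D1 F vv q) (g := fun q => b • D1 F w q)
      (hv.const_smul a) (hw.const_smul b), fderiv_fun_const_smul hv,
    fderiv_fun_const_smul hw]
  simp [D1, smul_eq_mul]

lemma curve_x (y t : ℝ) (x : ℝ) :
    HasDerivAt (fun x' : ℝ => ((x', y, t) : E3)) (((1:ℝ), (0:ℝ), (0:ℝ)) : E3) x :=
  (hasDerivAt_id x).prodMk ((hasDerivAt_const _ _).prodMk (hasDerivAt_const _ _))
lemma curve_y (x t : ℝ) (y : ℝ) :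
    HasDerivAt (fun y' : ℝ => ((x, y', t) : E3)) (((0:ℝ), (1:ℝ), (0:ℝ)) : E3) y :=
  (hasDerivAt_const _ _).prodMk ((hasDerivAt_id y).prodMk (hasDerivAt_const _ _))
lemma curve_t (x y : ℝ) (t : ℝ) :
    HasDerivAt (fun t' : ℝ => ((x, y, t') : E3)) (((0:ℝ), (0:ℝ), (1:ℝ)) : E3) t :=
  (hasDerivAt_const _ _).prodMk ((hasDerivAt_const _ _).prodMk (hasDerivAt_id t))

lemma pdx_eq {f : ℝ → ℝ → ℝ → ℝ} (hf : ContDiff ℝ (⊤ : ℕ∞) (toF f)) (x y t : ℝ) :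
    pdx f x y t = D1 (toF f) (1,0,0) (x,y,t) :=
  (comp_curve hf (curve_x y t x)).deriv
lemma pdy_eq {f : ℝ → ℝ → ℝ → ℝ} (hf : ContDiff ℝ (⊤ : ℕ∞) (toF f)) (x y t : ℝ) :
    pdy f x y t = D1 (toF f) (0,1,0) (x,y,t) :=
  (comp_curve hf (curve_y x t y)).deriv
lemma pdt_eq {f : ℝ → ℝ → ℝ → ℝ} (hf : ContDiff ℝ (⊤ : ℕ∞) (toF f)) (x y t : ℝ) :
    pdt f x y t = D1 (toF f) (0,0,1) (x,y,t) :=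
  (comp_curve hf (curve_t x y t)).deriv

lemma lap_eq {f : ℝ → ℝ → ℝ → ℝ} (hf : ContDiff ℝ (⊤ : ℕ∞) (toF f)) (x y t : ℝ) :
    lap f x y t = D1 (D1 (toF f) (1,0,0)) (1,0,0) (x,y,t)
      + D1 (D1 (toF f) (0,1,0)) (0,1,0) (x,y,t) := by
  have h1 : (deriv fun x' => f x' y t) = fun x' => D1 (toF f) (1,0,0) ((x', y, t) : E3) := by
    funext x'; exact (comp_curve hf (curve_x y t x')).deriv
  have h2 : (deriv fun y' => f x y' t) = fun y' => D1 (toF f) (0,1,0) ((x, y', t) : E3) := by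
    funext y'; exact (comp_curve hf (curve_y x t y')).deriv
  show deriv (deriv fun x' => f x' y t) x + deriv (deriv fun y' => f x y' t) y = _
  rw [h1, h2, (comp_curve (D1_smooth hf (1,0,0)) (curve_x y t x)).deriv,
    (comp_curve (D1_smooth hf (0,1,0)) (curve_y x t y)).deriv]

lemma curveX (lam y t : ℝ) (x : ℝ) :
    HasDerivAt (fun x' : ℝ => ((x' * Real.cos (lam*t) + y * Real.sin (lam*t),
        -x' * Real.sin (lam*t) + y * Real.cos (lam*t), t) : E3))
      ((Real.cos (lam*t), -Real.sin (lam*t), 0) : E3) x := by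
  refine HasDerivAt.prodMk ?_ (HasDerivAt.prodMk ?_ (hasDerivAt_const _ _))
  · simpa using ((hasDerivAt_id x).mul_const (Real.cos (lam*t))).add_const (y * Real.sin (lam*t))
  · simpa using (((hasDerivAt_id x).neg.mul_const (Real.sin (lam*t))).add_const (y * Real.cos (lam*t)))

lemma curveY (lam x t : ℝ) (y : ℝ) :
    HasDerivAt (fun y' : ℝ => ((x * Real.cos (lam*t) + y' * Real.sin (lam*t),
        -x * Real.sin (lam*t) + y' * Real.cos (lam*t), t) : E3))
      ((Real.sin (lam*t), Real.cos (lam*t), 0) : E3) y := by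
  refine HasDerivAt.prodMk ?_ (HasDerivAt.prodMk ?_ (hasDerivAt_const _ _))
  · simpa using ((hasDerivAt_id y).mul_const (Real.sin (lam*t))).const_add (x * Real.cos (lam*t))
  · simpa using ((hasDerivAt_id y).mul_const (Real.cos (lam*t))).const_add (-x * Real.sin (lam*t))

lemma curveT (lam x y : ℝ) (t : ℝ) :
    HasDerivAt (fun t' : ℝ => ((x * Real.cos (lam*t') + y * Real.sin (lam*t'),
        -x * Real.sin (lam*t') + y * Real.cos (lam*t'), t') : E3))
      ((lam * (-x * Real.sin (lam*t) + y * Real.cos (lam*t)),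
        -(lam * (x * Real.cos (lam*t) + y * Real.sin (lam*t))), 1) : E3) t := by
  have hlam : HasDerivAt (fun t' : ℝ => lam * t') lam t := by
    simpa using (hasDerivAt_id t).const_mul lam
  have hc : HasDerivAt (fun t' : ℝ => Real.cos (lam * t')) (-Real.sin (lam*t) * lam) t := by
    simpa [Function.comp_def] using (Real.hasDerivAt_cos (lam*t)).comp t hlam
  have hs : HasDerivAt (fun t' : ℝ => Real.sin (lam * t')) (Real.cos (lam*t) * lam) t := by
    simpa [Function.comp_def] using (Real.hasDerivAt_sin (lam*t)).comp t hlam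
  refine HasDerivAt.prodMk ?_ (HasDerivAt.prodMk ?_ (hasDerivAt_id t))
  · have h := (hc.const_mul x).add (hs.const_mul y)
    exact h.congr_deriv (by ring)
  · have h := (hs.const_mul (-x)).add (hc.const_mul y)
    exact h.congr_deriv (by ring)

lemma quadDeriv (lam y : ℝ) (x : ℝ) :
    HasDerivAt (fun x' : ℝ => lam * (x' ^ 2 + y ^ 2) / 2) (lam * x) x := by
  have h0 : HasDerivAt (fun x' : ℝ => x' ^ 2 + y ^ 2) (2 * x) x := by
    simpa using (hasDerivAt_pow 2 x).add_const (y ^ 2)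
  have h := (h0.const_mul lam).div_const 2
  exact h.congr_deriv (by ring)

lemma quadDeriv' (lam x : ℝ) (y : ℝ) :
    HasDerivAt (fun y' : ℝ => lam * (x ^ 2 + y' ^ 2) / 2) (lam * y) y := by
  have h0 : HasDerivAt (fun y' : ℝ => x ^ 2 + y' ^ 2) (2 * y) y := by
    simpa using (hasDerivAt_pow 2 y).const_add (x ^ 2)
  have h := (h0.const_mul lam).div_const 2
  exact h.congr_deriv (by ring)

lemma pdx_rcompc {F : E3 → ℝ} (hF : ContDiff ℝ (⊤ : ℕ∞) F) (lam k x y t : ℝ) :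
    pdx (rcompc lam k F) x y t
    = D1 F (Real.cos (lam*t), -Real.sin (lam*t), 0)
        (x * Real.cos (lam*t) + y * Real.sin (lam*t),
          -x * Real.sin (lam*t) + y * Real.cos (lam*t), t) :=
  ((comp_curve hF (curveX lam y t x)).add_const k).deriv

lemma pdy_rcompc {F : E3 → ℝ} (hF : ContDiff ℝ (⊤ : ℕ∞) F) (lam k x y t : ℝ) :
    pdy (rcompc lam k F) x y t
    = D1 F (Real.sin (lam*t), Real.cos (lam*t), 0)
        (x * Real.cos (lam*t) + y * Real.sin (lam*t),
          -x * Real.sin (lam*t) + y * Real.cos (lam*t), t) :=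
  ((comp_curve hF (curveY lam x t y)).add_const k).deriv

lemma pdt_rcompc {F : E3 → ℝ} (hF : ContDiff ℝ (⊤ : ℕ∞) F) (lam k x y t : ℝ) :
    pdt (rcompc lam k F) x y t
    = D1 F (lam * (-x * Real.sin (lam*t) + y * Real.cos (lam*t)),
        -(lam * (x * Real.cos (lam*t) + y * Real.sin (lam*t))), 1)
        (x * Real.cos (lam*t) + y * Real.sin (lam*t),
          -x * Real.sin (lam*t) + y * Real.cos (lam*t), t) :=
  ((comp_curve hF (curveT lam x y t)).add_const k).deriv

lemma pdx_rcompq {F : E3 → ℝ} (hF : ContDiff ℝ (⊤ : ℕ∞) F) (lam x y t : ℝ) :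
    pdx (rcompq lam F) x y t
    = D1 F (Real.cos (lam*t), -Real.sin (lam*t), 0)
        (x * Real.cos (lam*t) + y * Real.sin (lam*t),
          -x * Real.sin (lam*t) + y * Real.cos (lam*t), t) + lam * x :=
  ((comp_curve hF (curveX lam y t x)).add (quadDeriv lam y x)).deriv

lemma pdy_rcompq {F : E3 → ℝ} (hF : ContDiff ℝ (⊤ : ℕ∞) F) (lam x y t : ℝ) :
    pdy (rcompq lam F) x y t
    = D1 F (Real.sin (lam*t), Real.cos (lam*t), 0)
        (x * Real.cos (lam*t) + y * Real.sin (lam*t),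
          -x * Real.sin (lam*t) + y * Real.cos (lam*t), t) + lam * y :=
  ((comp_curve hF (curveY lam x t y)).add (quadDeriv' lam x y)).deriv

lemma vec_dx (lam t : ℝ) : ((Real.cos (lam*t), -Real.sin (lam*t), 0) : E3)
    = Real.cos (lam*t) • ((1:ℝ),(0:ℝ),(0:ℝ)) + (-Real.sin (lam*t)) • ((0:ℝ),(1:ℝ),(0:ℝ)) := by
  simp [Prod.ext_iff]

lemma vec_dy (lam t : ℝ) : ((Real.sin (lam*t), Real.cos (lam*t), 0) : E3)
    = Real.sin (lam*t) • ((1:ℝ),(0:ℝ),(0:ℝ)) + Real.cos (lam*t) • ((0:ℝ),(1:ℝ),(0:ℝ)) := by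
  simp [Prod.ext_iff]

lemma vec_dt (lam x y t : ℝ) : ((lam * (-x * Real.sin (lam*t) + y * Real.cos (lam*t)),
      -(lam * (x * Real.cos (lam*t) + y * Real.sin (lam*t))), 1) : E3)
    = (lam * (-x * Real.sin (lam*t) + y * Real.cos (lam*t))) • ((1:ℝ),(0:ℝ),(0:ℝ))
      + (-(lam * (x * Real.cos (lam*t) + y * Real.sin (lam*t)))) • ((0:ℝ),(1:ℝ),(0:ℝ))
      + (1:ℝ) • ((0:ℝ),(0:ℝ),(1:ℝ)) := by
  simp [Prod.ext_iff]

lemma lap_rcomp {F : E3 → ℝ} (hF : ContDiff ℝ (⊤ : ℕ∞) F) (lam x y t : ℝ) :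
    lap (rcomp lam F) x y t
    = D1 (D1 F (1,0,0)) (1,0,0)
        (x * Real.cos (lam*t) + y * Real.sin (lam*t),
          -x * Real.sin (lam*t) + y * Real.cos (lam*t), t)
      + D1 (D1 F (0,1,0)) (0,1,0)
        (x * Real.cos (lam*t) + y * Real.sin (lam*t),
          -x * Real.sin (lam*t) + y * Real.cos (lam*t), t) := by
  have h1 : (deriv fun x' => rcomp lam F x' y t)
      = fun x' => D1 F (Real.cos (lam*t), -Real.sin (lam*t), 0)
          ((x' * Real.cos (lam*t) + y * Real.sin (lam*t),
            -x' * Real.sin (lam*t) + y * Real.cos (lam*t), t) : E3) := by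
    funext x'; exact (comp_curve hF (curveX lam y t x')).deriv
  have h2 : (deriv fun y' => rcomp lam F x y' t)
      = fun y' => D1 F (Real.sin (lam*t), Real.cos (lam*t), 0)
          ((x * Real.cos (lam*t) + y' * Real.sin (lam*t),
            -x * Real.sin (lam*t) + y' * Real.cos (lam*t), t) : E3) := by
    funext y'; exact (comp_curve hF (curveY lam x t y')).deriv
  show deriv (deriv fun x' => rcomp lam F x' y t) x
      + deriv (deriv fun y' => rcomp lam F x y' t) y = _
  rw [h1, h2, (comp_curve (D1_smooth hF _) (curveX lam y t x)).deriv,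
    (comp_curve (D1_smooth hF _) (curveY lam x t y)).deriv,
    vec_dx lam t, vec_dy lam t]
  simp only [D1_inner hF, D1_lin2]
  linear_combination (D1 (D1 F (1,0,0)) (1,0,0)
        ((x * Real.cos (lam*t) + y * Real.sin (lam*t),
          -x * Real.sin (lam*t) + y * Real.cos (lam*t), t) : E3)
      + D1 (D1 F (0,1,0)) (0,1,0)
        ((x * Real.cos (lam*t) + y * Real.sin (lam*t),
          -x * Real.sin (lam*t) + y * Real.cos (lam*t), t) : E3))
      * Real.sin_sq_add_cos_sq (lam*t)

lemma lap_rcompq {F : E3 → ℝ} (hF : ContDiff ℝ (⊤ : ℕ∞) F) (lam x y t : ℝ) :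
    lap (rcompq lam F) x y t
    = D1 (D1 F (1,0,0)) (1,0,0)
        (x * Real.cos (lam*t) + y * Real.sin (lam*t),
          -x * Real.sin (lam*t) + y * Real.cos (lam*t), t)
      + D1 (D1 F (0,1,0)) (0,1,0)
        (x * Real.cos (lam*t) + y * Real.sin (lam*t),
          -x * Real.sin (lam*t) + y * Real.cos (lam*t), t) + 2 * lam := by
  have h1 : (deriv fun x' => rcompq lam F x' y t)
      = fun x' => D1 F (Real.cos (lam*t), -Real.sin (lam*t), 0)
          ((x' * Real.cos (lam*t) + y * Real.sin (lam*t),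
            -x' * Real.sin (lam*t) + y * Real.cos (lam*t), t) : E3) + lam * x' := by
    funext x'; exact ((comp_curve hF (curveX lam y t x')).add (quadDeriv lam y x')).deriv
  have h2 : (deriv fun y' => rcompq lam F x y' t)
      = fun y' => D1 F (Real.sin (lam*t), Real.cos (lam*t), 0)
          ((x * Real.cos (lam*t) + y' * Real.sin (lam*t),
            -x * Real.sin (lam*t) + y' * Real.cos (lam*t), t) : E3) + lam * y' := by
    funext y'; exact ((comp_curve hF (curveY lam x t y')).add (quadDeriv' lam x y')).deriv
  have hlx : HasDerivAt (fun x' : ℝ => lam * x') lam x := by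
    simpa using (hasDerivAt_id x).const_mul lam
  have hly : HasDerivAt (fun y' : ℝ => lam * y') lam y := by
    simpa using (hasDerivAt_id y).const_mul lam
  show deriv (deriv fun x' => rcompq lam F x' y t) x
      + deriv (deriv fun y' => rcompq lam F x y' t) y = _
  rw [h1, h2, show deriv (fun x' => D1 F (Real.cos (lam*t), -Real.sin (lam*t), 0)
            ((x' * Real.cos (lam*t) + y * Real.sin (lam*t),
              -x' * Real.sin (lam*t) + y * Real.cos (lam*t), t) : E3) + lam * x') x = _ from
      ((comp_curve (D1_smooth hF _) (curveX lam y t x)).add hlx).deriv,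
    show deriv (fun y' => D1 F (Real.sin (lam*t), Real.cos (lam*t), 0)
            ((x * Real.cos (lam*t) + y' * Real.sin (lam*t),
              -x * Real.sin (lam*t) + y' * Real.cos (lam*t), t) : E3) + lam * y') y = _ from
      ((comp_curve (D1_smooth hF _) (curveY lam x t y)).add hly).deriv,
    vec_dx lam t, vec_dy lam t]
  simp only [D1_inner hF, D1_lin2]
  linear_combination (D1 (D1 F (1,0,0)) (1,0,0)
        ((x * Real.cos (lam*t) + y * Real.sin (lam*t),
          -x * Real.sin (lam*t) + y * Real.cos (lam*t), t) : E3)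
      + D1 (D1 F (0,1,0)) (0,1,0)
        ((x * Real.cos (lam*t) + y * Real.sin (lam*t),
          -x * Real.sin (lam*t) + y * Real.cos (lam*t), t) : E3))
      * Real.sin_sq_add_cos_sq (lam*t)

/-- If smooth `u`, `v` solve the plasma system, then for every `λ ∈ ℝ` the
rotated functions `ũ(x,y,t) = u(x cos(λt) + y sin(λt), -x sin(λt) + y cos(λt), t)` and
`ṽ(x,y,t) = v(x cos(λt) + y sin(λt), -x sin(λt) + y cos(λt), t) + λ(x² + y²)/2` also
solve the system (the symmetry generated by `X₄`). -/
theorem plasma_symmetry_X4 (u v : ℝ → ℝ → ℝ → ℝ)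
    (hu : Smooth3 u) (hv : Smooth3 v)
    (hsol : IsPlasmaSol u v) (lam : ℝ) :
    IsPlasmaSol
      (fun x y t => u (x * Real.cos (lam * t) + y * Real.sin (lam * t))
        (-x * Real.sin (lam * t) + y * Real.cos (lam * t)) t)
      (fun x y t => v (x * Real.cos (lam * t) + y * Real.sin (lam * t))
        (-x * Real.sin (lam * t) + y * Real.cos (lam * t)) t
        + lam * (x ^ 2 + y ^ 2) / 2) := by
  intro eps heps x y t
  have hU : ContDiff ℝ (⊤ : ℕ∞) (toF u) := hu
  have hV : ContDiff ℝ (⊤ : ℕ∞) (toF v) := hv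
  have hG : ContDiff ℝ (⊤ : ℕ∞) (toF (fun x' y' t' => v x' y' t' + eps * u x' y' t')) :=
    hV.add (contDiff_const.mul hU)
  have hWF : toF (plasmaW eps u v) = fun p => toF u p
      - (D1 (D1 (toF u) (1,0,0)) (1,0,0) p + D1 (D1 (toF u) (0,1,0)) (0,1,0) p)
      + eps * (D1 (D1 (toF v) (1,0,0)) (1,0,0) p + D1 (D1 (toF v) (0,1,0)) (0,1,0) p) := by
    funext p
    obtain ⟨a, b, c⟩ := p
    show u a b c - lap u a b c + eps * lap v a b c = _
    rw [lap_eq hU a b c, lap_eq hV a b c]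
    rfl
  have hW : ContDiff ℝ (⊤ : ℕ∞) (toF (plasmaW eps u v)) := by
    rw [hWF]
    exact (hU.sub ((D1_smooth (D1_smooth hU _) _).add (D1_smooth (D1_smooth hU _) _))).add
      (contDiff_const.mul ((D1_smooth (D1_smooth hV _) _).add (D1_smooth (D1_smooth hV _) _)))
  have hWt : plasmaW eps
      (fun x y t => u (x * Real.cos (lam * t) + y * Real.sin (lam * t))
        (-x * Real.sin (lam * t) + y * Real.cos (lam * t)) t)
      (fun x y t => v (x * Real.cos (lam * t) + y * Real.sin (lam * t))
        (-x * Real.sin (lam * t) + y * Real.cos (lam * t)) t + lam * (x ^ 2 + y ^ 2) / 2)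
      = rcompc lam (eps * (2 * lam)) (toF (plasmaW eps u v)) := by
    funext a b c
    show u (a * Real.cos (lam * c) + b * Real.sin (lam * c))
          (-a * Real.sin (lam * c) + b * Real.cos (lam * c)) c
        - lap (rcomp lam (toF u)) a b c + eps * lap (rcompq lam (toF v)) a b c
      = u (a * Real.cos (lam * c) + b * Real.sin (lam * c))
          (-a * Real.sin (lam * c) + b * Real.cos (lam * c)) c
        - lap u (a * Real.cos (lam * c) + b * Real.sin (lam * c))
            (-a * Real.sin (lam * c) + b * Real.cos (lam * c)) c
        + eps * lap v (a * Real.cos (lam * c) + b * Real.sin (lam * c))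
            (-a * Real.sin (lam * c) + b * Real.cos (lam * c)) c
        + eps * (2 * lam)
    rw [lap_rcomp hU lam a b c, lap_rcompq hV lam a b c, lap_eq hU, lap_eq hV]
    ring
  have hgq : (fun x' y' t' => v (x' * Real.cos (lam * t') + y' * Real.sin (lam * t'))
        (-x' * Real.sin (lam * t') + y' * Real.cos (lam * t')) t' + lam * (x' ^ 2 + y' ^ 2) / 2
        + eps * u (x' * Real.cos (lam * t') + y' * Real.sin (lam * t'))
          (-x' * Real.sin (lam * t') + y' * Real.cos (lam * t')) t')
      = rcompq lam (toF (fun x' y' t' => v x' y' t' + eps * u x' y' t')) := by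
    funext a b c
    show v (a * Real.cos (lam * c) + b * Real.sin (lam * c))
          (-a * Real.sin (lam * c) + b * Real.cos (lam * c)) c + lam * (a ^ 2 + b ^ 2) / 2
        + eps * u (a * Real.cos (lam * c) + b * Real.sin (lam * c))
            (-a * Real.sin (lam * c) + b * Real.cos (lam * c)) c
      = v (a * Real.cos (lam * c) + b * Real.sin (lam * c))
          (-a * Real.sin (lam * c) + b * Real.cos (lam * c)) c
        + eps * u (a * Real.cos (lam * c) + b * Real.sin (lam * c))
            (-a * Real.sin (lam * c) + b * Real.cos (lam * c)) c
        + lam * (a ^ 2 + b ^ 2) / 2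
    ring
  rw [hWt, hgq]
  have hs0 := hsol eps heps (x * Real.cos (lam * t) + y * Real.sin (lam * t))
      (-x * Real.sin (lam * t) + y * Real.cos (lam * t)) t
  simp only [pb] at hs0 ⊢
  rw [pdt_eq hW, pdx_eq hG, pdy_eq hW, pdx_eq hW, pdy_eq hG] at hs0
  rw [pdt_rcompc hW lam (eps * (2 * lam)) x y t, pdx_rcompc hW lam (eps * (2 * lam)) x y t,
    pdy_rcompc hW lam (eps * (2 * lam)) x y t, pdx_rcompq hG lam x y t,
    pdy_rcompq hG lam x y t, vec_dx lam t, vec_dy lam t, vec_dt lam x y t]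
  simp only [D1_lin2, D1_lin3]
  linear_combination hs0
    + (D1 (toF (fun x' y' t' => v x' y' t' + eps * u x' y' t')) (1,0,0)
          ((x * Real.cos (lam * t) + y * Real.sin (lam * t),
            -x * Real.sin (lam * t) + y * Real.cos (lam * t), t) : E3)
        * D1 (toF (plasmaW eps u v)) (0,1,0)
          ((x * Real.cos (lam * t) + y * Real.sin (lam * t),
            -x * Real.sin (lam * t) + y * Real.cos (lam * t), t) : E3)
      - D1 (toF (plasmaW eps u v)) (1,0,0)
          ((x * Real.cos (lam * t) + y * Real.sin (lam * t),
            -x * Real.sin (lam * t) + y * Real.cos (lam * t), t) : E3)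
        * D1 (toF (fun x' y' t' => v x' y' t' + eps * u x' y' t')) (0,1,0)
          ((x * Real.cos (lam * t) + y * Real.sin (lam * t),
            -x * Real.sin (lam * t) + y * Real.cos (lam * t), t) : E3))
      * Real.sin_sq_add_cos_sq (lam * t)
end

section
/- Let u, v : ℝ³ → ℝ be smooth functions of (x, y, t) solving the plasma system ∂_t(u - ∇²u ± ∇²v) + {v ± u, u - ∇²u ± ∇²v} = 0 (both sign choices), and suppose in addition that {u, ∇²u} = 0 identically. Then for every λ ∈ ℝ, the pair (λ·u, v) also solves the plasma system (and still satisfies {λu, ∇²(λu)} = 0). -/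
section Aux

variable {f g h : ℝ → ℝ → ℝ → ℝ}

lemma smooth3_diffx (hf : Smooth3 f) (x y t : ℝ) :
    DifferentiableAt ℝ (fun x' => f x' y t) x := by
  have key : (fun x' : ℝ => f x' y t)
      = (fun p : ℝ × ℝ × ℝ => f p.1 p.2.1 p.2.2) ∘ (fun x' : ℝ => (x', y, t)) := rfl
  rw [key]
  exact DifferentiableAt.comp x ((hf.differentiable (by simp)) _)
    ((differentiableAt_id).prodMk ((differentiableAt_const _).prodMk (differentiableAt_const _)))

lemma smooth3_diffy (hf : Smooth3 f) (x y t : ℝ) :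
    DifferentiableAt ℝ (fun y' => f x y' t) y := by
  have key : (fun y' : ℝ => f x y' t)
      = (fun p : ℝ × ℝ × ℝ => f p.1 p.2.1 p.2.2) ∘ (fun y' : ℝ => (x, y', t)) := rfl
  rw [key]
  exact DifferentiableAt.comp y ((hf.differentiable (by simp)) _)
    ((differentiableAt_const _).prodMk ((differentiableAt_id).prodMk (differentiableAt_const _)))

lemma smooth3_difft (hf : Smooth3 f) (x y t : ℝ) :
    DifferentiableAt ℝ (fun t' => f x y t') t := by
  have key : (fun t' : ℝ => f x y t')
      = (fun p : ℝ × ℝ × ℝ => f p.1 p.2.1 p.2.2) ∘ (fun t' : ℝ => (x, y, t')) := rfl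
  rw [key]
  exact DifferentiableAt.comp t ((hf.differentiable (by simp)) _)
    ((differentiableAt_const _).prodMk ((differentiableAt_const _).prodMk differentiableAt_id))

lemma smooth3_pdx (hf : Smooth3 f) : Smooth3 (pdx f) := by
  have key : (fun p : ℝ × ℝ × ℝ => pdx f p.1 p.2.1 p.2.2)
      = fun p => fderiv ℝ (fun q : ℝ × ℝ × ℝ => f q.1 q.2.1 q.2.2) p (1, 0, 0) := by
    funext p
    obtain ⟨x, y, t⟩ := p
    have hline : HasDerivAt (fun x' : ℝ => ((x' : ℝ), (y : ℝ), (t : ℝ)))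
        ((1 : ℝ), (0 : ℝ), (0 : ℝ)) x :=
      (hasDerivAt_id x).prodMk ((hasDerivAt_const x y).prodMk (hasDerivAt_const x t))
    have hF := ((hf.differentiable (by simp)) (x, y, t)).hasFDerivAt
    exact (hF.comp_hasDerivAt x hline).deriv
  unfold Smooth3 at *
  rw [key]
  exact (hf.fderiv_right (by simp)).clm_apply contDiff_const

lemma smooth3_pdy (hf : Smooth3 f) : Smooth3 (pdy f) := by
  have key : (fun p : ℝ × ℝ × ℝ => pdy f p.1 p.2.1 p.2.2)
      = fun p => fderiv ℝ (fun q : ℝ × ℝ × ℝ => f q.1 q.2.1 q.2.2) p (0, 1, 0) := by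
    funext p
    obtain ⟨x, y, t⟩ := p
    have hline : HasDerivAt (fun y' : ℝ => ((x : ℝ), (y' : ℝ), (t : ℝ)))
        ((0 : ℝ), (1 : ℝ), (0 : ℝ)) y :=
      (hasDerivAt_const y x).prodMk ((hasDerivAt_id y).prodMk (hasDerivAt_const y t))
    have hF := ((hf.differentiable (by simp)) (x, y, t)).hasFDerivAt
    exact (hF.comp_hasDerivAt y hline).deriv
  unfold Smooth3 at *
  rw [key]
  exact (hf.fderiv_right (by simp)).clm_apply contDiff_const

lemma smooth3_lap (hf : Smooth3 f) : Smooth3 (lap f) := by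
  have key : (fun p : ℝ × ℝ × ℝ => lap f p.1 p.2.1 p.2.2)
      = fun p : ℝ × ℝ × ℝ =>
          pdx (pdx f) p.1 p.2.1 p.2.2 + pdy (pdy f) p.1 p.2.1 p.2.2 := rfl
  unfold Smooth3 at *
  rw [key]
  exact (smooth3_pdx (smooth3_pdx hf)).add (smooth3_pdy (smooth3_pdy hf))

lemma pdx_lin3 (hf : Smooth3 f) (hg : Smooth3 g) (hh : Smooth3 h) (a b c x y t : ℝ) :
    pdx (fun x y t => a * f x y t + b * g x y t + c * h x y t) x y t
      = a * pdx f x y t + b * pdx g x y t + c * pdx h x y t := by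
  unfold pdx
  exact ((((smooth3_diffx hf x y t).hasDerivAt.const_mul a).add
    ((smooth3_diffx hg x y t).hasDerivAt.const_mul b)).add
    ((smooth3_diffx hh x y t).hasDerivAt.const_mul c)).deriv

lemma pdy_lin3 (hf : Smooth3 f) (hg : Smooth3 g) (hh : Smooth3 h) (a b c x y t : ℝ) :
    pdy (fun x y t => a * f x y t + b * g x y t + c * h x y t) x y t
      = a * pdy f x y t + b * pdy g x y t + c * pdy h x y t := by
  unfold pdy
  exact ((((smooth3_diffy hf x y t).hasDerivAt.const_mul a).add
    ((smooth3_diffy hg x y t).hasDerivAt.const_mul b)).add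
    ((smooth3_diffy hh x y t).hasDerivAt.const_mul c)).deriv

lemma pdt_lin3 (hf : Smooth3 f) (hg : Smooth3 g) (hh : Smooth3 h) (a b c x y t : ℝ) :
    pdt (fun x y t => a * f x y t + b * g x y t + c * h x y t) x y t
      = a * pdt f x y t + b * pdt g x y t + c * pdt h x y t := by
  unfold pdt
  exact ((((smooth3_difft hf x y t).hasDerivAt.const_mul a).add
    ((smooth3_difft hg x y t).hasDerivAt.const_mul b)).add
    ((smooth3_difft hh x y t).hasDerivAt.const_mul c)).deriv

lemma lap_const_mul (k : ℝ) (x y t : ℝ) :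
    lap (fun a b c => k * f a b c) x y t = k * lap f x y t := by
  unfold lap
  have h1 : (fun x' => k * f x' y t) = fun x' => k * (fun s => f s y t) x' := rfl
  have h2 : (fun y' => k * f x y' t) = fun y' => k * (fun s => f x s t) y' := rfl
  rw [h1, h2, deriv_const_mul_field' k, deriv_const_mul_field' k,
    deriv_const_mul_field' k, deriv_const_mul_field' k]
  simp only [deriv_const_mul_field]
  ring

lemma pdx_const_mul (k : ℝ) (x y t : ℝ) :
    pdx (fun a b c => k * f a b c) x y t = k * pdx f x y t :=
  deriv_const_mul_field k

lemma pdy_const_mul (k : ℝ) (x y t : ℝ) :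
    pdy (fun a b c => k * f a b c) x y t = k * pdy f x y t :=
  deriv_const_mul_field k

end Aux

/-- partial symmetry `u ∂_u`: If smooth `u`, `v` solve the plasma system
and in addition `{u, ∇²u} = 0` identically, then for every `λ ∈ ℝ` the pair `(λu, v)`
also solves the plasma system, and still satisfies `{λu, ∇²(λu)} = 0`. -/
theorem plasma_partial_symmetry_scaling (u v : ℝ → ℝ → ℝ → ℝ)
    (hu : Smooth3 u) (hv : Smooth3 v)
    (hsol : IsPlasmaSol u v)
    (hcond : ∀ x y t : ℝ, pb u (lap u) x y t = 0) :
    ∀ lam : ℝ,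
      IsPlasmaSol (fun x y t => lam * u x y t) v ∧
      ∀ x y t : ℝ,
        pb (fun x' y' t' => lam * u x' y' t')
          (lap (fun x' y' t' => lam * u x' y' t')) x y t = 0 := by
  intro lam
  have hlapu : Smooth3 (lap u) := smooth3_lap hu
  have hlapv : Smooth3 (lap v) := smooth3_lap hv
  constructor
  · intro ε hε x y t
    have hmem : -ε ∈ ({1, -1} : Set ℝ) := by
      rcases hε with h | h <;> simp_all
    have sWp : Smooth3 (plasmaW ε u v) := by
      have key : (fun p : ℝ × ℝ × ℝ => plasmaW ε u v p.1 p.2.1 p.2.2)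
          = fun p : ℝ × ℝ × ℝ => u p.1 p.2.1 p.2.2 - lap u p.1 p.2.1 p.2.2
              + ε * lap v p.1 p.2.1 p.2.2 := rfl
      unfold Smooth3
      rw [key]
      exact (hu.sub hlapu).add (contDiff_const.mul hlapv)
    have sWm : Smooth3 (plasmaW (-ε) u v) := by
      have key : (fun p : ℝ × ℝ × ℝ => plasmaW (-ε) u v p.1 p.2.1 p.2.2)
          = fun p : ℝ × ℝ × ℝ => u p.1 p.2.1 p.2.2 - lap u p.1 p.2.1 p.2.2
              + (-ε) * lap v p.1 p.2.1 p.2.2 := rfl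
      unfold Smooth3
      rw [key]
      exact (hu.sub hlapu).add (contDiff_const.mul hlapv)
    have Ep := hsol ε hε x y t
    have Em := hsol (-ε) hmem x y t
    -- expand the brackets
    simp only [pb] at Ep Em ⊢
    -- rewrite first arguments as linear combinations
    have hargp : (fun x' y' t' => v x' y' t' + ε * u x' y' t')
        = fun a b c => 1 * v a b c + ε * u a b c + 0 * u a b c := by
      funext a b c; ring
    have hargm : (fun x' y' t' => v x' y' t' + (-ε) * u x' y' t')
        = fun a b c => 1 * v a b c + (-ε) * u a b c + 0 * u a b c := by
      funext a b c; ring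
    have hargl : (fun x' y' t' => v x' y' t' + ε * ((fun x y t => lam * u x y t) x' y' t'))
        = fun a b c => 1 * v a b c + (ε * lam) * u a b c + 0 * u a b c := by
      funext a b c; ring
    have hWp : plasmaW ε u v
        = fun a b c => 1 * u a b c + (-1) * lap u a b c + ε * lap v a b c := by
      funext a b c; simp only [plasmaW]; ring
    have hWm : plasmaW (-ε) u v
        = fun a b c => 1 * u a b c + (-1) * lap u a b c + (-ε) * lap v a b c := by
      funext a b c; simp only [plasmaW]; ring
    have hWl : plasmaW ε (fun x y t => lam * u x y t) v
        = fun a b c => ((lam + 1) / 2) * plasmaW ε u v a b c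
            + ((lam - 1) / 2) * plasmaW (-ε) u v a b c + 0 * u a b c := by
      funext a b c
      simp only [plasmaW]
      rw [lap_const_mul]
      ring
    -- pointwise identities for the scaled W
    have hpdtWl : pdt (plasmaW ε (fun x y t => lam * u x y t) v) x y t
        = ((lam + 1) / 2) * pdt (plasmaW ε u v) x y t
          + ((lam - 1) / 2) * pdt (plasmaW (-ε) u v) x y t := by
      rw [hWl, pdt_lin3 sWp sWm hu]; ring
    have hpdxWl : pdx (plasmaW ε (fun x y t => lam * u x y t) v) x y t
        = ((lam + 1) / 2) * pdx (plasmaW ε u v) x y t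
          + ((lam - 1) / 2) * pdx (plasmaW (-ε) u v) x y t := by
      rw [hWl, pdx_lin3 sWp sWm hu]; ring
    have hpdyWl : pdy (plasmaW ε (fun x y t => lam * u x y t) v) x y t
        = ((lam + 1) / 2) * pdy (plasmaW ε u v) x y t
          + ((lam - 1) / 2) * pdy (plasmaW (-ε) u v) x y t := by
      rw [hWl, pdy_lin3 sWp sWm hu]; ring
    have hpdxWp : pdx (plasmaW ε u v) x y t
        = pdx u x y t - pdx (lap u) x y t + ε * pdx (lap v) x y t := by
      rw [hWp, pdx_lin3 hu hlapu hlapv]; ring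
    have hpdyWp : pdy (plasmaW ε u v) x y t
        = pdy u x y t - pdy (lap u) x y t + ε * pdy (lap v) x y t := by
      rw [hWp, pdy_lin3 hu hlapu hlapv]; ring
    have hpdxWm : pdx (plasmaW (-ε) u v) x y t
        = pdx u x y t - pdx (lap u) x y t + (-ε) * pdx (lap v) x y t := by
      rw [hWm, pdx_lin3 hu hlapu hlapv]; ring
    have hpdyWm : pdy (plasmaW (-ε) u v) x y t
        = pdy u x y t - pdy (lap u) x y t + (-ε) * pdy (lap v) x y t := by
      rw [hWm, pdy_lin3 hu hlapu hlapv]; ring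
    have hpdxargp : pdx (fun x' y' t' => v x' y' t' + ε * u x' y' t') x y t
        = pdx v x y t + ε * pdx u x y t := by
      rw [hargp, pdx_lin3 hv hu hu]; ring
    have hpdyargp : pdy (fun x' y' t' => v x' y' t' + ε * u x' y' t') x y t
        = pdy v x y t + ε * pdy u x y t := by
      rw [hargp, pdy_lin3 hv hu hu]; ring
    have hpdxargm : pdx (fun x' y' t' => v x' y' t' + (-ε) * u x' y' t') x y t
        = pdx v x y t + (-ε) * pdx u x y t := by
      rw [hargm, pdx_lin3 hv hu hu]; ring
    have hpdyargm : pdy (fun x' y' t' => v x' y' t' + (-ε) * u x' y' t') x y t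
        = pdy v x y t + (-ε) * pdy u x y t := by
      rw [hargm, pdy_lin3 hv hu hu]; ring
    have hpdxargl :
        pdx (fun x' y' t' => v x' y' t' + ε * ((fun x y t => lam * u x y t) x' y' t')) x y t
        = pdx v x y t + (ε * lam) * pdx u x y t := by
      rw [hargl, pdx_lin3 hv hu hu]; ring
    have hpdyargl :
        pdy (fun x' y' t' => v x' y' t' + ε * ((fun x y t => lam * u x y t) x' y' t')) x y t
        = pdy v x y t + (ε * lam) * pdy u x y t := by
      rw [hargl, pdy_lin3 hv hu hu]; ring
    rw [hpdxargp, hpdyargp, hpdxWp, hpdyWp] at Ep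
    rw [hpdxargm, hpdyargm, hpdxWm, hpdyWm] at Em
    have hc := hcond x y t
    simp only [pb] at hc
    rw [hpdtWl, hpdxWl, hpdyWl, hpdxargl, hpdyargl, hpdxWp, hpdyWp, hpdxWm, hpdyWm]
    linear_combination ((lam + 1) / 2) * Ep + ((lam - 1) / 2) * Em
      - (ε * (lam ^ 2 - 1)) * hc
  · intro x y t
    have hc := hcond x y t
    simp only [pb] at hc ⊢
    have h1 : lap (fun x' y' t' => lam * u x' y' t') = fun a b c => lam * lap u a b c := by
      funext a b c; exact lap_const_mul lam a b c
    rw [h1, pdx_const_mul, pdy_const_mul, pdx_const_mul, pdy_const_mul]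
    linear_combination lam ^ 2 * hc
end
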